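/- Every Lusin π-base for a topological space (X,τ) is an α-scheme for (X,τ). -/

import Mathlib

open Set Topology

universe u v

/-- The restriction `p↾n` of `p : ℕ → ℕ`, as a finite sequence in `ω^{<ω}`. -/
def pre (p : ℕ → ℕ) (n : ℕ) : List ℕ := List.ofFn fun i : Fin n => p i

/-- `a ⊑ p` : the finite sequence `a` is an initial segment of the branch `p`. -/
def IsPre (a : List ℕ) (p : ℕ → ℕ) : Prop := a = pre p a.length

/-- `S_a = {p ∈ ω^ω : a ⊑ p}`, the pieces of the standard Lusin scheme. -/
def stdS (a : List ℕ) : Set (ℕ → ℕ) := {p | IsPre a p}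

section scheme

variable {X Y : Type*}

/-- `fruit_p(V) = ⋂_n V_{p↾n}`. -/
def fruit (V : List ℕ → Set X) (p : ℕ → ℕ) : Set X := ⋂ n, V (pre p n)

/-- `flesh(V) = ⋃_a V_a`. -/
def flesh (V : List ℕ → Set X) : Set X := ⋃ a, V a

/-- The Souslin scheme `V` covers the set `A`. -/
def Covers (V : List ℕ → Set X) (A : Set X) : Prop :=
  V [] = A ∧ ∀ a, V a = ⋃ n, V (a ++ [n])

/-- The Souslin scheme `V` partitions the set `A`. -/
def Partitions (V : List ℕ → Set X) (A : Set X) : Prop :=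
  Covers V A ∧ ∀ a, ∀ n m : ℕ, n ≠ m → V (a ++ [n]) ∩ V (a ++ [m]) = ∅

/-- `V` is complete: every fruit is nonempty. -/
def CompleteScheme (V : List ℕ → Set X) : Prop := ∀ q : ℕ → ℕ, (fruit V q).Nonempty

/-- `V` has strict branches: every fruit is a singleton. -/
def StrictBranches (V : List ℕ → Set X) : Prop := ∀ q : ℕ → ℕ, ∃ x, fruit V q = {x}

/-- `V` is regular: `V_{a⌢n} ⊆ V_a`. -/
def RegularScheme (V : List ℕ → Set X) : Prop := ∀ a n, V (a ++ [n]) ⊆ V a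

/-- `V` has nonempty leaves. -/
def NonemptyLeaves (V : List ℕ → Set X) : Prop := ∀ a, (V a).Nonempty

/-- `V` is an open Souslin scheme with respect to the topology `t`. -/
def OpenScheme (t : TopologicalSpace X) (V : List ℕ → Set X) : Prop := ∀ a, t.IsOpen (V a)

/-- `V` is semi-open with respect to the topology `t`: `V_a ⊆ Cl_t(Int_t(V_a))`. -/
def SemiOpenScheme (t : TopologicalSpace X) (V : List ℕ → Set X) : Prop :=
  ∀ a, V a ⊆ @closure _ t (@interior _ t (V a))

/-- `Ṽ^k_b = ⋃_{j ≥ k} V_{b⌢j}`. -/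
def shootSet (V : List ℕ → Set X) (b : List ℕ) (k : ℕ) : Set X :=
  ⋃ j, ⋃ (_ : k ≤ j), V (b ++ [j])

/-- `shoot_b(V) = {Ṽ^k_b : k ∈ ω}`. -/
def shoot (V : List ℕ → Set X) (b : List ℕ) : Set (Set X) := {G | ∃ k, G = shootSet V b k}

/-- `γ → U`: some member of the family `γ` is contained in `U`. -/
def Engulfs (γ : Set (Set X)) (U : Set X) : Prop := ∃ G ∈ γ, G ⊆ U

/-- `p →_V U`: there is an infinite `L ⊆ ω` with `shoot_{p↾n}(V) → U` for all `n ∈ L`. -/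
def ArrowSeq (V : List ℕ → Set X) (p : ℕ → ℕ) (U : Set X) : Prop :=
  ∃ L : Set ℕ, L.Infinite ∧ ∀ n ∈ L, Engulfs (shoot V (pre p n)) U

/-- `p →_{V,t} x`: `p →_V U` for every `t`-open `U` containing `x`. -/
def ArrowPt (t : TopologicalSpace X) (V : List ℕ → Set X) (p : ℕ → ℕ) (x : X) : Prop :=
  ∀ U : Set X, t.IsOpen U → x ∈ U → ArrowSeq V p U

/-- `V` is a Lusin π-base for `(X, t)`. -/
def LusinPiBase (t : TopologicalSpace X) (V : List ℕ → Set X) : Prop :=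
  OpenScheme t V ∧ Partitions V Set.univ ∧ StrictBranches V ∧
    ∀ x : X, ∀ U : Set X, t.IsOpen U → x ∈ U →
      ∃ a : List ℕ, ∃ n : ℕ, x ∈ V a ∧ shootSet V a n ⊆ U

/-- `V` is an α-scheme for `(X, t)`. -/
def AlphaScheme (t : TopologicalSpace X) (V : List ℕ → Set X) : Prop :=
  OpenScheme t V ∧ CompleteScheme V ∧ Covers V Set.univ ∧
    (∀ a : List ℕ, ∀ x ∈ V a, ∃ p : ℕ → ℕ, IsPre a p ∧ x ∈ fruit V p ∧ ArrowPt t V p x) ∧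
    (∀ p : ℕ → ℕ, ∃ x ∈ fruit V p, ArrowPt t V p x)

/-- `V` is a ramose α-scheme for `(X, t)`. -/
def RamoseAlphaScheme (t : TopologicalSpace X) (V : List ℕ → Set X) : Prop :=
  AlphaScheme t V ∧ ∀ a : List ℕ, ∀ x ∈ V a,
    Cardinal.mk {p : ℕ → ℕ // IsPre a p ∧ x ∈ fruit V p ∧ ArrowPt t V p x} = Cardinal.continuum

/-- `γ` is a π-base for `(X, t)`. -/
def PiBase (t : TopologicalSpace X) (γ : Set (Set X)) : Prop :=
  (∀ G ∈ γ, G.Nonempty ∧ t.IsOpen G) ∧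
    ∀ U : Set X, t.IsOpen U → U.Nonempty → ∃ G ∈ γ, G ⊆ U

/-- `γ` is a π-net for the subspace `A` of `(X, t)`. -/
def PiNetFor (t : TopologicalSpace X) (γ : Set (Set X)) (A : Set X) : Prop :=
  (∀ G ∈ γ, G.Nonempty) ∧
    ∀ U : Set X, t.IsOpen U → (U ∩ A).Nonempty → ∃ G ∈ γ, G ⊆ U ∩ A

/-- `V` is a π-base Souslin scheme on `(X, t)`:
an open scheme such that `{V_b : a ⊑ b}` is a π-net for the subspace `V_a`, for each `a`. -/
def PiBaseScheme (t : TopologicalSpace X) (V : List ℕ → Set X) : Prop :=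
  OpenScheme t V ∧ ∀ a, PiNetFor t {S | ∃ b, a <+: b ∧ S = V b} (V a)

/-- `(X, t)` is a π-space. -/
def PiSpace (t : TopologicalSpace X) : Prop :=
  ∃ V : List ℕ → Set X, OpenScheme t V ∧ Partitions V Set.univ ∧ StrictBranches V ∧
    PiBase t {S | ∃ a, S = V a}

/-- `(X, t)` is zero-dimensional: it has a base consisting of clopen sets. -/
def ZeroDimT (t : TopologicalSpace X) : Prop :=
  ∀ U : Set X, t.IsOpen U → ∀ x ∈ U, ∃ C : Set X, t.IsOpen C ∧ @IsClosed _ t C ∧ x ∈ C ∧ C ⊆ U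

/-- `branches_V(x) = {q ∈ ω^ω : x ∈ fruit_q(V)}`. -/
def branches (V : List ℕ → Set X) (x : X) : Set (ℕ → ℕ) := {q | x ∈ fruit V q}

/-- `f` is a selector on `V`: a surjection of `ω^ω` onto `flesh(V)` such that each fiber
`f⁻¹(x)` is a dense subset of the subspace `branches_V(x)` of the Baire space. -/
def IsSelector (V : List ℕ → Set X) (f : (ℕ → ℕ) → X) : Prop :=
  (∀ p, f p ∈ flesh V) ∧ (∀ x ∈ flesh V, ∃ p, f p = x) ∧
    ∀ x ∈ flesh V, f ⁻¹' {x} ⊆ branches V x ∧ branches V x ⊆ closure (f ⁻¹' {x})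

/-- The topology `σ_{t,f}` on `ω^ω` generated by the subbase
`{f⁻¹[U] : U ∈ t} ∪ {S_a : a ∈ ω^{<ω}}`. -/
def sigmaTop (t : TopologicalSpace X) (f : (ℕ → ℕ) → X) : TopologicalSpace (ℕ → ℕ) :=
  TopologicalSpace.generateFrom
    ({S | ∃ U : Set X, t.IsOpen U ∧ S = f ⁻¹' U} ∪ {S | ∃ a : List ℕ, S = stdS a})

end scheme

/-- `(ω^ω, t)` is a standard π-space: the family `τ_N \ {∅}` of nonempty open sets of the
Baire space is a π-base for `(ω^ω, t)`. -/
def StandardPiSpace (t : TopologicalSpace (ℕ → ℕ)) : Prop :=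
  (∀ U : Set (ℕ → ℕ), IsOpen U → U.Nonempty → t.IsOpen U) ∧
    ∀ U : Set (ℕ → ℕ), t.IsOpen U → U.Nonempty → ∃ G : Set (ℕ → ℕ), IsOpen G ∧ G.Nonempty ∧ G ⊆ U

/-!
If `x` lies on the branch `p`, then for every open `U ∋ x` and every level `m`, property (L6)
applied to `U ∩ V_{p↾m}` yields a node `b` with `x ∈ V_b` and a tail `Ṽ^k_b ⊆ U ∩ V_{p↾m}`.
Since `V` partitions `X`, `b` is an initial segment of `p`; and `b` must be at least `m` long,
for otherwise the tail would contain a nonempty `V_{b⌢j}` with `j ≠ p(|b|)`, disjoint from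
`V_{p↾m}`. So `shoot_{p↾n}(V) → U` for unboundedly many `n`, i.e. `p →_{V,τ} x`. Both (S1) and
(S2) then reduce to finding branches through points, which the covering property provides.
-/

section LusinPiBase

variable {X : Type*} {V : List ℕ → Set X}

lemma length_pre (p : ℕ → ℕ) (n : ℕ) : (pre p n).length = n := by simp [pre]

lemma pre_succ (p : ℕ → ℕ) (n : ℕ) : pre p (n + 1) = pre p n ++ [p n] := by
  rw [pre, List.ofFn_succ', List.concat_eq_append]
  rfl

lemma pre_prefix_pre (p : ℕ → ℕ) {m n : ℕ} (h : m ≤ n) : pre p m <+: pre p n := by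
  induction n, h using Nat.le_induction with
  | base => exact List.prefix_refl _
  | succ n _ ih => exact ih.trans (pre_succ p n ▸ List.prefix_append _ _)

lemma isPre_iff_getElem {a : List ℕ} {p : ℕ → ℕ} :
    IsPre a p ↔ ∀ i (h : i < a.length), p i = a[i] := by
  refine ⟨fun h i hi => ?_, fun h => List.ext_getElem (length_pre p _).symm ?_⟩
  · simp only [IsPre] at h
    rw [List.getElem_of_eq h hi]
    simp [pre]
  · intro i hi _
    simp [pre, h i hi]

lemma exists_isPre (a : List ℕ) : ∃ p, IsPre a p :=
  ⟨fun i => a.getD i 0, isPre_iff_getElem.2 fun i hi => by simp [hi]⟩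

lemma mem_of_mem_fruit_of_isPre {a : List ℕ} {p : ℕ → ℕ} {x : X} (hx : x ∈ fruit V p)
    (ha : IsPre a p) : x ∈ V a := by
  rw [ha]
  exact mem_iInter.1 hx _

lemma StrictBranches.completeScheme (h : StrictBranches V) : CompleteScheme V := fun q => by
  obtain ⟨x, hx⟩ := h q
  exact hx ▸ singleton_nonempty x

lemma CompleteScheme.nonempty (h : CompleteScheme V) (a : List ℕ) : (V a).Nonempty := by
  obtain ⟨p, hp⟩ := exists_isPre a
  obtain ⟨x, hx⟩ := h p
  exact ⟨x, mem_of_mem_fruit_of_isPre hx hp⟩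

lemma Covers.regularScheme {A : Set X} (h : Covers V A) : RegularScheme V := fun a n =>
  h.2 a ▸ subset_iUnion (fun k => V (a ++ [k])) n

lemma Covers.subset_of_prefix {A : Set X} (h : Covers V A) {b c : List ℕ} (hbc : b <+: c) :
    V c ⊆ V b := by
  obtain ⟨t, rfl⟩ := hbc
  induction t using List.reverseRecOn with
  | nil => simp
  | append_singleton t n ih =>
    exact (List.append_assoc b t [n] ▸ h.regularScheme (b ++ t) n).trans ih

/-- Every node of a pruned, prefix-closed tree of finite sequences lies on an infinite branch. -/
lemma exists_isPre_forall_pre {P : List ℕ → Prop} (hclosed : ∀ b c, b <+: c → P c → P b)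
    (hext : ∀ c, P c → ∃ k, P (c ++ [k])) {a : List ℕ} (ha : P a) :
    ∃ p, IsPre a p ∧ ∀ n, P (pre p n) := by
  choose! f hf using hext
  let next : ℕ → List ℕ → ℕ := fun n c => if h : n < a.length then a[n] else f c
  let g : ℕ → List ℕ := fun n => Nat.rec [] (fun n c => c ++ [next n c]) n
  let p : ℕ → ℕ := fun n => next n (g n)
  have hpre : ∀ n, pre p n = g n := by
    intro n
    induction n with
    | zero => rfl
    | succ n ih => rw [pre_succ, ih]
  have hp : IsPre a p := isPre_iff_getElem.2 fun i hi => dif_pos hi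
  refine ⟨p, hp, fun n => ?_⟩
  induction n with
  | zero => exact hclosed _ _ (hp ▸ pre_prefix_pre p (Nat.zero_le _)) ha
  | succ n ih =>
    by_cases hn : n + 1 ≤ a.length
    · exact hclosed _ _ (hp ▸ pre_prefix_pre p hn) ha
    · have hpn : p n = f (pre p n) := by rw [hpre]; exact dif_neg (by omega)
      rw [pre_succ, hpn]
      exact hf _ ih

lemma Covers.exists_isPre_mem_fruit {A : Set X} (h : Covers V A) {a : List ℕ} {x : X}
    (hx : x ∈ V a) : ∃ p, IsPre a p ∧ x ∈ fruit V p := by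
  obtain ⟨p, hp, hmem⟩ := exists_isPre_forall_pre (P := (x ∈ V ·))
    (fun _ _ hbc hc => h.subset_of_prefix hbc hc)
    (fun c hc => mem_iUnion.1 (h.2 c ▸ hc)) hx
  exact ⟨p, hp, mem_iInter.2 hmem⟩

lemma Partitions.isPre_of_mem {A : Set X} (h : Partitions V A) {b : List ℕ} {p : ℕ → ℕ} {x : X}
    (hxb : x ∈ V b) (hxp : x ∈ fruit V p) : IsPre b p := by
  induction b using List.reverseRecOn with
  | nil => rfl
  | append_singleton b i ih =>
    have hb : IsPre b p := ih (h.1.regularScheme b i hxb)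
    have hxi : x ∈ V (b ++ [p b.length]) := by
      have := mem_iInter.1 hxp (b.length + 1)
      rwa [pre_succ, ← hb] at this
    have hi : i = p b.length := by
      by_contra hne
      exact (h.2 b i _ hne).subset ⟨hxb, hxi⟩
    subst hi
    rw [IsPre, List.length_append, List.length_singleton, pre_succ, ← hb]

lemma Partitions.le_length_of_shootSet_subset {A : Set X} (h : Partitions V A)
    (hne : CompleteScheme V) {b : List ℕ} {p : ℕ → ℕ} {k m : ℕ} (hb : IsPre b p)
    (hsub : shootSet V b k ⊆ V (pre p m)) : m ≤ b.length := by
  by_contra! hlt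
  set j := max k (p b.length + 1)
  obtain ⟨y, hy⟩ := hne.nonempty (b ++ [j])
  have hy_shoot : y ∈ shootSet V b k := mem_iUnion₂.2 ⟨j, le_max_left _ _, hy⟩
  have hy_next : y ∈ V (b ++ [p b.length]) := by
    have := h.1.subset_of_prefix (pre_prefix_pre p hlt) (hsub hy_shoot)
    rwa [pre_succ, ← hb] at this
  exact (h.2 b j _ (by omega)).subset ⟨hy, hy_next⟩

lemma LusinPiBase.arrowPt_of_mem_fruit [t : TopologicalSpace X] (hV : LusinPiBase t V)
    {p : ℕ → ℕ} {x : X} (hx : x ∈ fruit V p) : ArrowPt t V p x := by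
  obtain ⟨hopen, hpart, hstrict, hL6⟩ := hV
  intro U hU hxU
  refine ⟨{n | Engulfs (shoot V (pre p n)) U}, infinite_of_forall_exists_gt fun m => ?_,
    fun _ hn => hn⟩
  obtain ⟨b, k, hxb, hsub⟩ :=
    hL6 x _ (IsOpen.inter hU (hopen _)) ⟨hxU, mem_iInter.1 hx (m + 1)⟩
  have hb : IsPre b p := hpart.isPre_of_mem hxb hx
  refine ⟨b.length, ⟨shootSet V b k, ⟨k, by rw [← hb]⟩, hsub.trans inter_subset_left⟩, ?_⟩
  exact hpart.le_length_of_shootSet_subset hstrict.completeScheme hb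
    (hsub.trans inter_subset_right)

end LusinPiBase

/-- Every Lusin π-base for a space `(X,τ)` is an α-scheme for `(X,τ)`. -/
theorem statement15 {X : Type*} [tX : TopologicalSpace X] (V : List ℕ → Set X)
    (hV : LusinPiBase tX V) :
    AlphaScheme tX V := by
  have ⟨hopen, hpart, hstrict, _⟩ := hV
  refine ⟨hopen, hstrict.completeScheme, hpart.1, fun a x hx => ?_, fun p => ?_⟩
  · obtain ⟨p, hp, hxp⟩ := hpart.1.exists_isPre_mem_fruit hx
    exact ⟨p, hp, hxp, hV.arrowPt_of_mem_fruit hxp⟩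
  · obtain ⟨x, hx⟩ := hstrict p
    have hxp : x ∈ fruit V p := hx ▸ rfl
    exact ⟨x, hxp, hV.arrowPt_of_mem_fruit hxp⟩
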